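/- Let q be an odd prime power, n = 8, and for k ∈ {1, 3} consider ψ₈^{(k)} on F_{q^8}. Then the F_q-subspace U = {(x, ψ₈^{(k)}(x)) : x ∈ F_{q^8}} is not GL(2, q^8)-equivalent to U' = {(x, δx^{q^s} + x^{q^{s+4}}) : x ∈ F_{q^8}} for any s with gcd(s, 4) = 1 and any δ ∈ F_{q^8} with N_{q^8/q^4}(δ) ∉ {0, 1}. -/

import Mathlib

/-!
If the image of `U` under `(a b; c d)` were `U'`, then with `L x = a x + b ψ(x)` we would have
`c x + d ψ(x) = δ L(x)^{q^s} + L(x)^{q^{s+4}}` for all `x`. Both sides are `q`-polynomials of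
`q`-degree `< 8`, and such a polynomial vanishing on all of `F_{q^8}` is zero (it has fewer than
`q^8` roots otherwise), so their coefficients agree. The coefficients of `ψ` are `±1/2` at the odd
indices and `0` at the even ones, and `s` is odd; comparing the coefficients of `x`, `x^{q^4}` and
`x^{q^{s+2}}` forces `c = d = 0`, contradicting `ad - bc ≠ 0`.
-/

open Polynomial Finset

namespace FiniteField

variable {F : Type*} [Field F] [Fintype F] {q n : ℕ}

theorem one_lt_and_ne_zero_of_card_eq_pow (hF : Fintype.card F = q ^ n) : 1 < q ∧ n ≠ 0 := by
  have h := hF ▸ Fintype.one_lt_card (α := F)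
  have hn : n ≠ 0 := by rintro rfl; simp at h
  exact ⟨(Nat.one_lt_pow_iff hn).1 h, hn⟩

theorem two_ne_zero_of_odd_card (h : Odd (Fintype.card F)) : (2 : F) ≠ 0 :=
  Ring.two_ne_zero fun h2 => by
    rw [even_card_iff_char_two, ← Nat.even_iff] at h2
    exact Nat.not_even_iff_odd.2 h h2

theorem pow_pow_mod (hF : Fintype.card F = q ^ n) (x : F) (m : ℕ) :
    x ^ q ^ m = x ^ q ^ (m % n) := by
  conv_lhs => rw [← Nat.div_add_mod m n, pow_add, pow_mul, pow_mul, ← hF, pow_card_pow]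

theorem exists_ringHom_eq_pow_pow (hF : Fintype.card F = q ^ n) (m : ℕ) :
    ∃ φ : F →+* F, ∀ x, φ x = x ^ q ^ m := by
  obtain ⟨p, _, k, hp, hk⟩ := card' F
  have : Fact p.Prime := ⟨hp⟩
  obtain ⟨i, -, rfl⟩ := (Nat.dvd_prime_pow hp).1
    (hk ▸ hF ▸ dvd_pow_self q (one_lt_and_ne_zero_of_card_eq_pow hF).2)
  exact ⟨iterateFrobenius F p (i * m), fun x => by rw [iterateFrobenius_def, pow_mul]⟩

/-- `e ⬝ᵥ qPowers q x` is the `q`-polynomial `∑ i, e i * x ^ q ^ i` evaluated at `x`. -/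
def qPowers [NeZero n] (q : ℕ) (x : F) : ZMod n → F := fun i => x ^ q ^ i.val

def twist [NeZero n] (q m : ℕ) (e : ZMod n → F) : ZMod n → F :=
  fun j => e (j - (m : ZMod n)) ^ q ^ m

theorem eq_zero_of_forall_dotProduct_qPowers_eq_zero [NeZero n] (hF : Fintype.card F = q ^ n)
    {e : ZMod n → F} (h : ∀ x, e ⬝ᵥ qPowers q x = 0) : e = 0 := by
  obtain ⟨hq, hn⟩ := one_lt_and_ne_zero_of_card_eq_pow hF
  set P : F[X] := ∑ i, C (e i) * X ^ q ^ i.val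
  have hP : P = 0 := by
    apply eq_zero_of_natDegree_lt_card_of_eval_eq_zero' P univ
    · intro x _
      simpa [P, eval_finsetSum, dotProduct, qPowers] using h x
    · rw [card_univ, hF]
      calc P.natDegree ≤ q ^ (n - 1) := natDegree_sum_le_of_forall_le _ _ fun i _ =>
            (natDegree_C_mul_X_pow_le _ _).trans
              (Nat.pow_le_pow_right hq.le (Nat.le_sub_one_of_lt (ZMod.val_lt i)))
        _ < q ^ n := Nat.pow_lt_pow_right hq (by omega)
  ext i
  simpa [P, finsetSum_coeff, coeff_C_mul, coeff_X_pow,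
    (Nat.pow_right_injective hq).eq_iff, (ZMod.val_injective n).eq_iff]
    using congrArg (coeff · (q ^ i.val)) hP

theorem dotProduct_qPowers_pow [NeZero n] (hF : Fintype.card F = q ^ n) (e : ZMod n → F)
    (x : F) (m : ℕ) : (e ⬝ᵥ qPowers q x) ^ q ^ m = twist q m e ⬝ᵥ qPowers q x := by
  obtain ⟨φ, hφ⟩ := exists_ringHom_eq_pow_pow hF m
  simp only [← hφ, dotProduct, map_sum, map_mul, twist, qPowers]
  refine Fintype.sum_equiv (Equiv.addRight (m : ZMod n)) _ _ fun i => ?_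
  simp only [hφ, Equiv.coe_addRight, add_sub_cancel_right, ← pow_mul, ← pow_add, ZMod.val_add,
    ZMod.val_natCast, Nat.add_mod_mod, ← pow_pow_mod hF]

theorem eq_of_forall_dotProduct_qPowers_eq [NeZero n] (hF : Fintype.card F = q ^ n)
    {e e' : ZMod n → F} (h : ∀ x, e ⬝ᵥ qPowers q x = e' ⬝ᵥ qPowers q x) : e = e' :=
  sub_eq_zero.1 <| eq_zero_of_forall_dotProduct_qPowers_eq_zero hF fun x => by
    rw [sub_dotProduct, h, sub_self]

theorem single_add_smul_eq_twist_of_forall_eq [NeZero n] (hF : Fintype.card F = q ^ n)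
    {e : ZMod n → F} {a b c d δ : F} {s t : ℕ} (h : ∀ x, c * x + d * (e ⬝ᵥ qPowers q x) =
      δ * (a * x + b * (e ⬝ᵥ qPowers q x)) ^ q ^ s
        + (a * x + b * (e ⬝ᵥ qPowers q x)) ^ q ^ t) :
    Pi.single 0 c + d • e =
      δ • twist q s (Pi.single 0 a + b • e) + twist q t (Pi.single 0 a + b • e) := by
  have hsingle : ∀ y x : F, y * x = (Pi.single 0 y : ZMod n → F) ⬝ᵥ qPowers q x := fun y x => by
    simp [single_dotProduct, qPowers]
  refine eq_of_forall_dotProduct_qPowers_eq hF fun x => ?_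
  have hx := h x
  rw [hsingle a, hsingle c] at hx
  simpa only [← smul_eq_mul, ← smul_dotProduct, ← add_dotProduct, dotProduct_qPowers_pow hF]
    using hx

theorem pow_pow_eq_self_of_eq_inv_two (hF : Fintype.card F = q ^ n) {y : F}
    (hy : y = 0 ∨ y = 2⁻¹ ∨ y = -2⁻¹) (m : ℕ) : y ^ q ^ m = y := by
  obtain ⟨φ, hφ⟩ := exists_ringHom_eq_pow_pow hF m
  rw [← hφ]
  rcases hy with rfl | rfl | rfl <;> simp [map_ofNat]

end FiniteField

theorem Set.snd_eq_of_image_graph_eq {α β γ δ : Type*} {T : α × β → γ × δ} {f : α → β}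
    {g : γ → δ} (h : T '' {v | ∃ x, v = (x, f x)} = {v | ∃ y, v = (y, g y)}) (x : α) :
    (T (x, f x)).2 = g (T (x, f x)).1 := by
  obtain ⟨y, hy⟩ : T (x, f x) ∈ {v | ∃ y, v = (y, g y)} := h ▸ Set.mem_image_of_mem T ⟨x, rfl⟩
  rw [hy]

open FiniteField

theorem exists_psi_coeffs {F : Type*} [Field F] {q k : ℕ} (hk : k = 1 ∨ k = 3) {ψk : F → F}
    (hψk : ∀ x : F, ψk x = (x ^ q ^ k + x ^ q ^ ((4 - k) % 8)
      - x ^ q ^ ((4 + k) % 8) + x ^ q ^ (8 - k)) / 2) :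
    ∃ e : ZMod 8 → F, (∀ i : ZMod 8, Even i.val → e i = 0) ∧
      (∀ i : ZMod 8, Odd i.val → e i = 2⁻¹ ∨ e i = -2⁻¹) ∧ ψk = fun x => e ⬝ᵥ qPowers q x := by
  refine ⟨fun i => if Even i.val then 0 else if i.val = k + 4 then -2⁻¹ else 2⁻¹,
    fun i hi => by simp [hi], fun i hi => by simp [Nat.not_even_iff_odd.2 hi]; tauto,
    funext fun x => ?_⟩
  rcases hk with rfl | rfl <;>
  · change _ = ∑ i : Fin 8, _
    simp +decide [hψk, qPowers, Fin.sum_univ_eight, ZMod.val]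
    ring

theorem eq_zero_of_forall_mul_add_mul_eq_pow_add_pow {F : Type*} [Field F] [Fintype F] {q : ℕ}
    (hF : Fintype.card F = q ^ 8) (h2 : (2 : F) ≠ 0) {e : ZMod 8 → F}
    (heven : ∀ i : ZMod 8, Even i.val → e i = 0)
    (hodd : ∀ i : ZMod 8, Odd i.val → e i = 2⁻¹ ∨ e i = -2⁻¹) {s : ℕ} (hs : Odd s)
    {a b c d δ : F} (h : ∀ x, c * x + d * (e ⬝ᵥ qPowers q x) =
      δ * (a * x + b * (e ⬝ᵥ qPowers q x)) ^ q ^ s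
        + (a * x + b * (e ⬝ᵥ qPowers q x)) ^ q ^ (s + 4)) :
    c = 0 ∧ d = 0 := by
  have hvec := single_add_smul_eq_twist_of_forall_eq hF h
  set A : ZMod 8 → F := Pi.single 0 a + b • e
  have hApow : ∀ i ≠ 0, ∀ m, A i ^ q ^ m = b ^ q ^ m * e i := fun i hi m => by
    have he : e i = 0 ∨ e i = 2⁻¹ ∨ e i = -2⁻¹ := by
      rcases Nat.even_or_odd i.val with hi | hi
      · exact Or.inl (heven i hi)
      · exact Or.inr (hodd i hi)
    simp [A, hi, mul_pow, pow_pow_eq_self_of_eq_inv_two hF he]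
  have hsq : ∀ i : ZMod 8, Odd i.val → e i ^ 2 = 4⁻¹ := fun i hi => by
    rcases hodd i hi with h | h <;> rw [h] <;> norm_num
  have hne : ∀ i : ZMod 8, Odd i.val → e i ≠ 0 := fun i hi => by
    rcases hodd i hi with h | h <;> simp [h, h2]
  obtain ⟨σ, hσ, hσs⟩ : ∃ σ : ZMod 8, Odd σ.val ∧ (s : ZMod 8) = σ := by
    refine ⟨s, ?_, rfl⟩
    rw [ZMod.val_natCast, Nat.odd_iff] at *
    omega
  have hindex : ∀ σ : ZMod 8, Odd σ.val → 0 - σ ≠ 0 ∧ 4 - σ ≠ 0 ∧ σ + 2 - σ = 2 ∧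
      σ + 2 - (σ + 4) = 6 ∧ 0 - (σ + 4) = 4 - σ ∧ 4 - (σ + 4) = 0 - σ ∧ Odd (0 - σ).val ∧
      Odd (4 - σ).val ∧ Odd (σ + 2).val ∧ σ + 2 ≠ 0 := by
    decide
  obtain ⟨h0σ, h4σ, hσ2, hσ6, h0σ4, h4σ4, ho0, ho4, ho2, h2σ⟩ := hindex σ hσ
  -- `A` vanishes at the even indices `2, 6`, so the coefficient of `x^{q^{s+2}}` gives `d = 0`;
  -- those of `x` and `x^{q^4}` give `c e(-s) = δ b^{q^s} (e(-s)^2 - e(4-s)^2) = 0`.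
  have hc := congrFun hvec 0
  have h4 := congrFun hvec 4
  have hd := congrFun hvec (σ + 2)
  simp only [twist, Pi.add_apply, Pi.smul_apply, smul_eq_mul, Nat.cast_add, Nat.cast_ofNat, hσs,
    h0σ4, h4σ4, hσ2, hσ6, Pi.single_eq_same, Pi.single_eq_of_ne h2σ,
    Pi.single_eq_of_ne (show (4 : ZMod 8) ≠ 0 by decide), hApow _ h0σ, hApow _ h4σ,
    hApow _ (show (2 : ZMod 8) ≠ 0 by decide), hApow _ (show (6 : ZMod 8) ≠ 0 by decide),
    heven 0 (by decide), heven 2 (by decide), heven 4 (by decide), heven 6 (by decide)] at hc h4 hd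
  have hcu : c * e (0 - σ) = 0 := by
    linear_combination e (0 - σ) * hc - e (4 - σ) * h4 + δ * b ^ q ^ s * (hsq _ ho0 - hsq _ ho4)
  have hdu : d * e (σ + 2) = 0 := by linear_combination hd
  exact ⟨(mul_eq_zero.1 hcu).resolve_right (hne _ ho0),
    (mul_eq_zero.1 hdu).resolve_right (hne _ ho2)⟩

theorem stmt_15_general (p r q k : ℕ) (hpodd : Odd p)
    (hq : q = p ^ r) (hk : k = 1 ∨ k = 3)
    (F : Type) [Field F] [Fintype F] (hF : Fintype.card F = q ^ 8)
    (ψk : F → F)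
    (hψk : ∀ x : F, ψk x = (x ^ q ^ k + x ^ q ^ ((4 - k) % 8)
      - x ^ q ^ ((4 + k) % 8) + x ^ q ^ (8 - k)) / 2) :
    ∀ (s : ℕ) (δ : F), Nat.gcd s 4 = 1 →
      δ ^ (q ^ 4 + 1) ≠ 0 → δ ^ (q ^ 4 + 1) ≠ 1 →
      ∀ a b c d : F, a * d - b * c ≠ 0 →
        (fun v : F × F => (a * v.1 + b * v.2, c * v.1 + d * v.2)) ''
            {v : F × F | ∃ x : F, v = (x, ψk x)}
          ≠ {v : F × F | ∃ x : F, v = (x, δ * x ^ q ^ s + x ^ q ^ ((s + 4) % 8))} := by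
  intro s δ hs _ _ a b c d hdet himage
  have h2 : (2 : F) ≠ 0 := two_ne_zero_of_odd_card (hF ▸ hq ▸ hpodd.pow.pow)
  obtain ⟨e, heven, hodd, rfl⟩ := exists_psi_coeffs hk hψk
  have H := Set.snd_eq_of_image_graph_eq himage
  simp only [← pow_pow_mod hF] at H
  obtain ⟨rfl, rfl⟩ := eq_zero_of_forall_mul_add_mul_eq_pow_add_pow hF h2 heven hodd
    (Nat.Coprime.coprime_dvd_right (by norm_num) hs).odd_of_right H
  exact hdet (by ring)

theorem stmt_15 (p r q k : ℕ) (hp : p.Prime) (hpodd : Odd p) (hr : 0 < r)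
    (hq : q = p ^ r) (hk : k = 1 ∨ k = 3)
    (F : Type) [Field F] [Fintype F] (hF : Fintype.card F = q ^ 8)
    (ψk : F → F)
    (hψk : ∀ x : F, ψk x = (x ^ q ^ k + x ^ q ^ ((4 - k) % 8)
      - x ^ q ^ ((4 + k) % 8) + x ^ q ^ (8 - k)) / 2) :
    ∀ (s : ℕ) (δ : F), Nat.gcd s 4 = 1 →
      δ ^ (q ^ 4 + 1) ≠ 0 → δ ^ (q ^ 4 + 1) ≠ 1 →
      ∀ a b c d : F, a * d - b * c ≠ 0 →
        (fun v : F × F => (a * v.1 + b * v.2, c * v.1 + d * v.2)) ''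
            {v : F × F | ∃ x : F, v = (x, ψk x)}
          ≠ {v : F × F | ∃ x : F, v = (x, δ * x ^ q ^ s + x ^ q ^ ((s + 4) % 8))} :=
  stmt_15_general p r q k hpodd hq hk F hF ψk hψk
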